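/- Let G be a compact topological group (e.g. a compact Lie group) and H a closed subgroup. If H is conjugate in G to a subgroup H' with H' ⊆ H, then H' = H. (That is, a closed subgroup of a compact group is never conjugate to a proper subgroup of itself.) -/

import Mathlib

/-!
Conjugation by `g` maps `H` into itself, so `g` lies in the submonoid of elements whose
conjugation preserves `H`. Since `H` is closed, this submonoid is closed, and in a compact
group a closed submonoid is a subgroup: `g⁻¹` is a cluster point of the powers `gⁿ`, `n ≥ 0`.
Hence conjugation by `g⁻¹` also maps `H` into itself, which is the reverse inclusion `H ≤ H'`.
-/

open Set

section

variable {G : Type*} [Group G]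

theorem Submonoid.inv_mem_of_isClosed [TopologicalSpace G] [IsTopologicalGroup G]
    [CompactSpace G] {M : Submonoid G} (hM : IsClosed (M : Set G)) {x : G} (hx : x ∈ M) :
    x⁻¹ ∈ M := by
  have hinv : x⁻¹ ∈ _root_.closure (range (x ^ · : ℕ → G)) := by
    rw [← closure_range_zpow_eq_pow]
    exact _root_.subset_closure (mem_range.2 ⟨-1, zpow_neg_one x⟩)
  exact closure_minimal (range_subset_iff.2 fun n ↦ pow_mem hx n) hM hinv

def conjInvariantSubmonoid (s : Set G) : Submonoid G where
  carrier := {x | ∀ y ∈ s, x * y * x⁻¹ ∈ s}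
  one_mem' y hy := by simpa using hy
  mul_mem' {a b} ha hb y hy := by
    simpa only [mul_inv_rev, mul_assoc] using ha _ (hb y hy)

theorem mem_conjInvariantSubmonoid {s : Set G} {x : G} :
    x ∈ conjInvariantSubmonoid s ↔ ∀ y ∈ s, x * y * x⁻¹ ∈ s :=
  Iff.rfl

theorem isClosed_conjInvariantSubmonoid [TopologicalSpace G] [IsTopologicalGroup G]
    {s : Set G} (hs : IsClosed s) : IsClosed (conjInvariantSubmonoid s : Set G) := by
  have : (conjInvariantSubmonoid s : Set G) = ⋂ y ∈ s, (fun x ↦ x * y * x⁻¹) ⁻¹' s := by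
    ext x
    simp only [SetLike.mem_coe, mem_conjInvariantSubmonoid, mem_iInter, mem_preimage]
  rw [this]
  exact isClosed_biInter fun y _ ↦ hs.preimage (by fun_prop)

end

/-- A closed subgroup of a compact topological group is never conjugate to a
proper subgroup of itself: if `H` is conjugate (by `g`) to `H' ⊆ H`, then `H' = H`. -/
theorem closed_subgroup_not_conjugate_to_proper_subgroup
    {G : Type*} [Group G] [TopologicalSpace G] [IsTopologicalGroup G] [CompactSpace G]
    (H H' : Subgroup G) (hH : IsClosed (H : Set G))
    (g : G) (hconj : Subgroup.map (MulAut.conj g).toMonoidHom H = H')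
    (hle : H' ≤ H) : H' = H := by
  subst hconj
  have hg : g ∈ conjInvariantSubmonoid (H : Set G) := fun y hy ↦
    hle ⟨y, hy, by simp⟩
  have hg_inv := Submonoid.inv_mem_of_isClosed (isClosed_conjInvariantSubmonoid hH) hg
  refine le_antisymm hle fun h hh ↦ ⟨g⁻¹ * h * g⁻¹⁻¹, hg_inv h hh, ?_⟩
  simp [mul_assoc]
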